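/- Let H be a complex Hilbert space and let V ⊆ B(H) be a linear subspace. Then the set E(V) of minimal V-projections on B(H) is nonempty, and F(V) = {T ∈ B(H) : E(T) = T for every E ∈ E(V)} = ⋂_{E ∈ E(V)} range(E). -/

import Mathlib

variable {H : Type*} [NormedAddCommGroup H] [InnerProductSpace ℂ H] [CompleteSpace H]

/-- The bounded operator on the Hilbert space `H ⊕ ⋯ ⊕ H` (with its ℓ²-norm)
induced by an `n × n` matrix of bounded operators on `H`. -/
noncomputable def matOp {H : Type*} [NormedAddCommGroup H] [InnerProductSpace ℂ H]
    {n : ℕ} (A : Matrix (Fin n) (Fin n) (H →L[ℂ] H)) :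
    PiLp 2 (fun _ : Fin n => H) →L[ℂ] PiLp 2 (fun _ : Fin n => H) :=
  ((PiLp.continuousLinearEquiv 2 ℂ (fun _ : Fin n => H)).symm.toContinuousLinearMap.comp
      (ContinuousLinearMap.pi fun i => ∑ j, (A i j).comp (ContinuousLinearMap.proj j))).comp
    (PiLp.continuousLinearEquiv 2 ℂ (fun _ : Fin n => H)).toContinuousLinearMap

/-- A linear map on `B(H)` is completely contractive if all of its matrix amplifications
are contractive with respect to the C*-norms on `Mₙ(B(H)) ≅ B(H ⊕ ⋯ ⊕ H)`. -/
def FullCC {H : Type*} [NormedAddCommGroup H] [InnerProductSpace ℂ H]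
    (φ : (H →L[ℂ] H) →ₗ[ℂ] (H →L[ℂ] H)) : Prop :=
  ∀ (n : ℕ) (A : Matrix (Fin n) (Fin n) (H →L[ℂ] H)), ‖matOp (A.map φ)‖ ≤ ‖matOp A‖

/-- An `S`-map: a completely contractive linear map of `B(H)` fixing `S` pointwise. -/
def IsSMap {H : Type*} [NormedAddCommGroup H] [InnerProductSpace ℂ H]
    (S : Set (H →L[ℂ] H)) (φ : (H →L[ℂ] H) →ₗ[ℂ] (H →L[ℂ] H)) : Prop :=
  FullCC φ ∧ ∀ s ∈ S, φ s = s

/-- A minimal `S`-projection: an idempotent `S`-map whose seminorm `T ↦ ‖E T‖`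
is minimal among the seminorms of all `S`-maps. -/
def IsMinimalSProj {H : Type*} [NormedAddCommGroup H] [InnerProductSpace ℂ H]
    (S : Set (H →L[ℂ] H)) (E : (H →L[ℂ] H) →ₗ[ℂ] (H →L[ℂ] H)) : Prop :=
  IsSMap S E ∧ E ∘ₗ E = E ∧
    ∀ ψ : (H →L[ℂ] H) →ₗ[ℂ] (H →L[ℂ] H), IsSMap S ψ →
      (∀ T, ‖ψ T‖ ≤ ‖E T‖) → ∀ T, ‖ψ T‖ = ‖E T‖

/-!
Pointwise weak-operator limits along ultrafilters of contractive maps on `B(H)` exist (bounded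
sesquilinear forms are represented by operators), and such limits of `S`-maps are `S`-maps, the
norm being WOT-lower semicontinuous on every matrix level. Applied to the Cesàro means of an
`S`-map `φ` this gives an `S`-map `C` with `C ∘ φ = C`. By Zorn's lemma, chains being bounded by
ultrafilter limits, there is such a `φ`-absorbing `S`-map `G` whose seminorm `T ↦ ‖G T‖` is
minimal among them. The Cesàro limit of `G` itself is absorbing, lies below `G` and kills
`T - G T`, so `G` is idempotent; an `S`-map `ψ` below `G` factors through `G` and `ψ ∘ G` is
absorbing, so `G` is a minimal `S`-projection. Finally `φ ∘ G` is a minimal `S`-projection too,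
so an operator `T` fixed by all of them satisfies `φ T = φ (G T) = T`.
-/

open Filter Topology ContinuousLinearMapWOT

section MatrixAmplification

variable {E : Type*} [NormedAddCommGroup E] [InnerProductSpace ℂ E] {n : ℕ}

lemma matOp_apply (A : Matrix (Fin n) (Fin n) (E →L[ℂ] E)) (x : PiLp 2 (fun _ : Fin n => E))
    (i : Fin n) : matOp A x i = ∑ j, A i j (x j) := by
  simp [matOp]

lemma inner_matOp_apply (A : Matrix (Fin n) (Fin n) (E →L[ℂ] E))
    (x y : PiLp 2 (fun _ : Fin n => E)) :
    inner ℂ y (matOp A x) = ∑ i, ∑ j, inner ℂ (y i) (A i j (x j)) := by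
  simp only [PiLp.inner_apply, matOp_apply, inner_sum]

variable (E n) in
@[simps]
noncomputable def matOpₗ :
    Matrix (Fin n) (Fin n) (E →L[ℂ] E) →ₗ[ℂ]
      (PiLp 2 (fun _ : Fin n => E) →L[ℂ] PiLp 2 (fun _ : Fin n => E)) where
  toFun := matOp
  map_add' A B := by ext x i; simp [matOp_apply, Finset.sum_add_distrib]
  map_smul' c A := by ext x i; simp [matOp_apply, Finset.smul_sum]

lemma norm_matOp_of_fin_one (T : E →L[ℂ] E) :
    ‖matOp (Matrix.of fun _ _ : Fin 1 => T)‖ = ‖T‖ := by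
  have hnorm (x : PiLp 2 (fun _ : Fin 1 => E)) : ‖x‖ = ‖x 0‖ := by
    simp [PiLp.norm_eq_of_L2]
  have happly (x : PiLp 2 (fun _ : Fin 1 => E)) :
      ‖matOp (Matrix.of fun _ _ : Fin 1 => T) x‖ = ‖T (x 0)‖ := by
    simp [hnorm, matOp_apply]
  refine le_antisymm (ContinuousLinearMap.opNorm_le_bound _ (norm_nonneg T) fun x => ?_)
    (T.opNorm_le_bound (by positivity) fun v => ?_)
  · rw [happly, hnorm]
    exact T.le_opNorm _
  · simpa [happly, hnorm] using
      (matOp (Matrix.of fun _ _ : Fin 1 => T)).le_opNorm (WithLp.toLp 2 fun _ => v)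

end MatrixAmplification

section SMap

variable {E : Type*} [NormedAddCommGroup E] [InnerProductSpace ℂ E] {S : Set (E →L[ℂ] E)}
  {φ ψ : (E →L[ℂ] E) →ₗ[ℂ] (E →L[ℂ] E)}

lemma FullCC.norm_apply_le (hφ : FullCC φ) (T : E →L[ℂ] E) : ‖φ T‖ ≤ ‖T‖ := by
  have h := hφ 1 (Matrix.of fun _ _ => T)
  rwa [show (Matrix.of fun _ _ : Fin 1 => T).map φ = Matrix.of fun _ _ => φ T from rfl,
    norm_matOp_of_fin_one, norm_matOp_of_fin_one] at h

lemma fullCC_id : FullCC (LinearMap.id : (E →L[ℂ] E) →ₗ[ℂ] (E →L[ℂ] E)) := fun _ A => by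
  rw [LinearMap.id_coe, Matrix.map_id]

lemma FullCC.comp (hφ : FullCC φ) (hψ : FullCC ψ) : FullCC (φ ∘ₗ ψ) := fun n A => by
  simpa only [LinearMap.coe_comp, Matrix.map_map] using (hφ n (A.map ψ)).trans (hψ n A)

lemma FullCC.pow (hφ : FullCC φ) (k : ℕ) : FullCC (φ ^ k) := by
  induction k with
  | zero => exact fullCC_id
  | succ k ih => rw [pow_succ, Module.End.mul_eq_comp]; exact ih.comp hφ

lemma FullCC.inv_card_smul_sum {κ : Type*} (s : Finset κ)
    {ψ : κ → (E →L[ℂ] E) →ₗ[ℂ] (E →L[ℂ] E)} (hψ : ∀ k ∈ s, FullCC (ψ k)) :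
    FullCC ((s.card : ℂ)⁻¹ • ∑ k ∈ s, ψ k) := fun n A => by
  have hmap : A.map ⇑((s.card : ℂ)⁻¹ • ∑ k ∈ s, ψ k) =
      (s.card : ℂ)⁻¹ • ∑ k ∈ s, A.map (ψ k) := by
    ext i j; simp [Matrix.sum_apply]
  calc ‖matOp (A.map ⇑((s.card : ℂ)⁻¹ • ∑ k ∈ s, ψ k))‖
      = ‖(s.card : ℂ)⁻¹ • ∑ k ∈ s, matOp (A.map (ψ k))‖ := by
        rw [hmap]; exact congrArg norm (by simp only [← matOpₗ_apply, map_smul, map_sum])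
    _ ≤ (s.card : ℝ)⁻¹ * ∑ k ∈ s, ‖matOp (A.map (ψ k))‖ := by
        refine (ContinuousLinearMap.opNorm_smul_le _ _).trans ?_
        rw [norm_inv, Complex.norm_natCast]; gcongr; exact norm_sum_le s _
    _ ≤ (s.card : ℝ)⁻¹ * (s.card * ‖matOp A‖) := by
        gcongr
        simpa only [nsmul_eq_mul] using Finset.sum_le_card_nsmul _ _ _ fun k hk => hψ k hk n A
    _ ≤ ‖matOp A‖ := by
        rcases s.card.eq_zero_or_pos with h | h
        · simp only [h, CharP.cast_eq_zero, inv_zero, zero_mul]; positivity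
        · rw [inv_mul_cancel_left₀ (by positivity)]

lemma isSMap_id : IsSMap S LinearMap.id := ⟨fullCC_id, fun _ _ => rfl⟩

lemma IsSMap.comp (hφ : IsSMap S φ) (hψ : IsSMap S ψ) : IsSMap S (φ ∘ₗ ψ) :=
  ⟨hφ.1.comp hψ.1, fun s hs => by rw [LinearMap.comp_apply, hψ.2 s hs, hφ.2 s hs]⟩

def IsAbsorbingSMap (S : Set (E →L[ℂ] E)) (φ₀ ψ : (E →L[ℂ] E) →ₗ[ℂ] (E →L[ℂ] E)) : Prop :=
  IsSMap S ψ ∧ ψ ∘ₗ φ₀ = ψ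

end SMap

section WeakOperatorLimits

lemma Ultrafilter.tendsto_limUnder_of_isBounded {ι X : Type*} [PseudoMetricSpace X]
    [ProperSpace X] [Nonempty X] (U : Ultrafilter ι) {g : ι → X}
    (hg : Bornology.IsBounded (Set.range g)) :
    Tendsto g U (𝓝 (limUnder (U : Filter ι) g)) := by
  obtain ⟨c, -, hc⟩ := hg.isCompact_closure.ultrafilter_le_nhds (U.map g) <|
    le_principal_iff.2 <| mem_map.2 <| univ_mem' fun i => subset_closure (Set.mem_range_self i)
  exact tendsto_nhds_limUnder ⟨c, hc⟩

variable {E : Type*} [NormedAddCommGroup E] [InnerProductSpace ℂ E] {X : Type*}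
  [AddCommGroup X] [Module ℂ X]

variable (E) in
def TendstoPointwiseWOT {ι : Type*} (l : Filter ι) (Φ : ι → X →ₗ[ℂ] (E →L[ℂ] E))
    (Ψ : X →ₗ[ℂ] (E →L[ℂ] E)) : Prop :=
  ∀ T, Tendsto (fun i => ofCLM (Φ i T)) l (𝓝 (ofCLM (Ψ T)))

lemma TendstoPointwiseWOT.apply_eq {ι : Type*} {l : Filter ι} [l.NeBot]
    {Φ : ι → X →ₗ[ℂ] (E →L[ℂ] E)} {Ψ : X →ₗ[ℂ] (E →L[ℂ] E)} (h : TendstoPointwiseWOT E l Φ Ψ)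
    {T : X} {S : E →L[ℂ] E} (hT : Tendsto (fun i => Φ i T) l (𝓝 S)) : Ψ T = S :=
  ofCLM_injective <| tendsto_nhds_unique (h T) ((continuous_ofCLM.tendsto S).comp hT)

variable [CompleteSpace E]

lemma exists_tendsto_ofCLM_of_norm_le {ι : Type*} (U : Ultrafilter ι) {A : ι → E →L[ℂ] E}
    {M : ℝ} (hA : ∀ i, ‖A i‖ ≤ M) :
    ∃ B : E →L[ℂ] E, Tendsto (fun i => ofCLM (A i)) U (𝓝 (ofCLM B)) := by
  have hbound (x y : E) (i : ι) : ‖inner ℂ (A i x) y‖ ≤ M * ‖x‖ * ‖y‖ :=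
    (norm_inner_le_norm _ _).trans <| by
      gcongr; exact (A i).le_of_opNorm_le (hA i) x
  set b : E → E → ℂ := fun x y => limUnder (U : Filter ι) fun i => inner ℂ (A i x) y
  have hb (x y : E) : Tendsto (fun i => inner ℂ (A i x) y) U (𝓝 (b x y)) :=
    U.tendsto_limUnder_of_isBounded <| isBounded_iff_forall_norm_le.2
      ⟨_, Set.forall_mem_range.2 (hbound x y)⟩
  let β : E →L⋆[ℂ] E →L[ℂ] ℂ := LinearMap.mkContinuous₂ (LinearMap.mk₂'ₛₗ _ _ b
      (fun x x' y => (((hb x y).add (hb x' y)).congr fun i => by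
        rw [map_add, inner_add_left]).limUnder_eq)
      (fun c x y => (((hb x y).const_mul _).congr fun i => by
        rw [map_smul, inner_smul_left]).limUnder_eq)
      (fun x y y' => (((hb x y).add (hb x y')).congr fun i => by
        rw [inner_add_right]).limUnder_eq)
      (fun c x y => (((hb x y).const_mul c).congr fun i => by
        rw [inner_smul_right]).limUnder_eq))
    M fun x y => le_of_tendsto (hb x y).norm (Eventually.of_forall (hbound x y))
  refine ⟨InnerProductSpace.continuousLinearMapOfBilin β,
    tendsto_iff_forall_inner_apply_tendsto.2 fun x y => ?_⟩
  simp only [ofCLM_apply, ← inner_conj_symm y, InnerProductSpace.continuousLinearMapOfBilin_apply]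
  exact (hb x y).star

lemma norm_le_of_tendsto_ofCLM {ι : Type*} {l : Filter ι} [l.NeBot] {A : ι → E →L[ℂ] E}
    {B : E →L[ℂ] E} (h : Tendsto (fun i => ofCLM (A i)) l (𝓝 (ofCLM B))) {r : ℝ}
    (hr : ∀ᶠ i in l, ‖A i‖ ≤ r) : ‖B‖ ≤ r := by
  obtain ⟨i₀, hi₀⟩ := hr.exists
  refine B.opNorm_le_bound ((norm_nonneg _).trans hi₀) fun x => ?_
  have hsq : ‖B x‖ ^ 2 ≤ r * ‖x‖ * ‖B x‖ := by
    have hlim := (tendsto_iff_forall_inner_apply_tendsto.1 h x (B x)).norm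
    rw [ofCLM_apply, inner_self_eq_norm_sq_to_K, norm_pow, RCLike.norm_ofReal, abs_norm] at hlim
    refine le_of_tendsto hlim (hr.mono fun i hi => ?_)
    calc ‖inner ℂ (B x) (A i x)‖ ≤ ‖B x‖ * (r * ‖x‖) :=
          (norm_inner_le_norm _ _).trans (by gcongr; exact (A i).le_of_opNorm_le hi x)
      _ = r * ‖x‖ * ‖B x‖ := mul_comm _ _
  rcases (norm_nonneg (B x)).eq_or_lt with h0 | h0
  · rw [← h0]; exact mul_nonneg ((norm_nonneg _).trans hi₀) (norm_nonneg x)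
  · nlinarith

lemma tendsto_ofCLM_matOp {ι : Type*} {l : Filter ι} {n : ℕ}
    {A : ι → Matrix (Fin n) (Fin n) (E →L[ℂ] E)} {B : Matrix (Fin n) (Fin n) (E →L[ℂ] E)}
    (h : ∀ p q, Tendsto (fun i => ofCLM (A i p q)) l (𝓝 (ofCLM (B p q)))) :
    Tendsto (fun i => ofCLM (matOp (A i))) l (𝓝 (ofCLM (matOp B))) := by
  refine tendsto_iff_forall_inner_apply_tendsto.2 fun x y => ?_
  simp only [ofCLM_apply, inner_matOp_apply]
  exact tendsto_finsetSum _ fun p _ => tendsto_finsetSum _ fun q _ =>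
    tendsto_iff_forall_inner_apply_tendsto.1 (h p q) (x q) (y p)

lemma exists_tendstoPointwiseWOT {ι : Type*} (U : Ultrafilter ι) (Φ : ι → X →ₗ[ℂ] (E →L[ℂ] E))
    (hΦ : ∀ T, ∃ M, ∀ i, ‖Φ i T‖ ≤ M) : ∃ Ψ, TendstoPointwiseWOT E U Φ Ψ := by
  choose M hM using hΦ
  choose B hB using fun T => exists_tendsto_ofCLM_of_norm_le U (hM T)
  let L : X →ₗ[ℂ] (E →WOT[ℂ] E) := linearMapOfTendsto (fun T => ofCLM (B T))
    (fun i => (linearEquiv ℂ).symm.toLinearMap ∘ₗ Φ i) (tendsto_pi_nhds.2 hB)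
  exact ⟨(linearEquiv ℂ).toLinearMap ∘ₗ L, hB⟩

lemma TendstoPointwiseWOT.norm_apply_le {ι : Type*} {l : Filter ι} [l.NeBot]
    {Φ : ι → X →ₗ[ℂ] (E →L[ℂ] E)} {Ψ : X →ₗ[ℂ] (E →L[ℂ] E)} (h : TendstoPointwiseWOT E l Φ Ψ)
    {T : X} {r : ℝ} (hr : ∀ᶠ i in l, ‖Φ i T‖ ≤ r) : ‖Ψ T‖ ≤ r :=
  norm_le_of_tendsto_ofCLM (h T) hr

lemma TendstoPointwiseWOT.fullCC {ι : Type*} {l : Filter ι} [l.NeBot]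
    {Φ : ι → (E →L[ℂ] E) →ₗ[ℂ] (E →L[ℂ] E)} {Ψ : (E →L[ℂ] E) →ₗ[ℂ] (E →L[ℂ] E)}
    (h : TendstoPointwiseWOT E l Φ Ψ) (hΦ : ∀ᶠ i in l, FullCC (Φ i)) : FullCC Ψ := fun n A =>
  norm_le_of_tendsto_ofCLM (tendsto_ofCLM_matOp fun p q => h (A p q)) (hΦ.mono fun _ hi => hi n A)

end WeakOperatorLimits

noncomputable def cesaroMean {M : Type*} [AddCommGroup M] [Module ℂ M] (φ : Module.End ℂ M)
    (n : ℕ) : Module.End ℂ M :=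
  (n : ℂ)⁻¹ • ∑ k ∈ Finset.range n, φ ^ k

lemma cesaroMean_apply {M : Type*} [AddCommGroup M] [Module ℂ M] (φ : Module.End ℂ M) (n : ℕ)
    (x : M) : cesaroMean φ n x = birkhoffAverage ℂ φ id n x := by
  simp [cesaroMean, birkhoffAverage, birkhoffSum, Module.End.pow_apply]

section Absorbing

variable {E : Type*} [NormedAddCommGroup E] [InnerProductSpace ℂ E] {S : Set (E →L[ℂ] E)}
  {φ φ₀ : (E →L[ℂ] E) →ₗ[ℂ] (E →L[ℂ] E)}

lemma FullCC.cesaroMean (hφ : FullCC φ) (n : ℕ) : FullCC (cesaroMean φ n) := by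
  simpa [_root_.cesaroMean] using FullCC.inv_card_smul_sum (Finset.range n) fun k _ => hφ.pow k

variable [CompleteSpace E]

lemma IsSMap.exists_isSMap_comp_eq (hφ : IsSMap S φ) : ∃ C, IsSMap S C ∧ C ∘ₗ φ = C := by
  set U := Ultrafilter.of (atTop : Filter ℕ)
  have hU : (U : Filter ℕ) ≤ atTop := Ultrafilter.of_le _
  obtain ⟨C, hC⟩ := exists_tendstoPointwiseWOT U (cesaroMean φ) fun T =>
    ⟨‖T‖, fun n => (hφ.1.cesaroMean n).norm_apply_le T⟩
  have hfix : ∀ s ∈ S, C s = s := fun s hs => hC.apply_eq <| tendsto_const_nhds.congr' <|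
    (eventually_ne_atTop 0).filter_mono hU |>.mono fun n hn => Eq.symm <| by
      dsimp only
      rw [cesaroMean_apply, Function.IsFixedPt.birkhoffAverage_eq ℂ (hφ.2 s hs) _root_.id
        (Nat.cast_ne_zero.2 hn), _root_.id]
  refine ⟨C, ⟨hC.fullCC (.of_forall hφ.1.cesaroMean), hfix⟩, LinearMap.ext fun T => ?_⟩
  have horbit : Bornology.IsBounded (Set.range fun n => _root_.id (φ^[n] T)) :=
    isBounded_iff_forall_norm_le.2 ⟨‖T‖, Set.forall_mem_range.2 fun n => by
      simpa only [_root_.id, Module.End.pow_apply] using (hφ.1.pow n).norm_apply_le T⟩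
  have hzero : C (φ T - T) = 0 := hC.apply_eq <| by
    simpa only [map_sub, cesaroMean_apply] using
      (tendsto_birkhoffAverage_apply_sub_birkhoffAverage ℂ horbit).mono_left hU
  rwa [map_sub, sub_eq_zero] at hzero

lemma IsChain.exists_ultrafilter_forall_mem {α : Type*} {r : α → α → Prop} (hrefl : ∀ a, r a a)
    (htrans : ∀ {a b c}, r a b → r b c → r a c) {c : Set α} (hc : IsChain r c)
    (hne : c.Nonempty) : ∃ U : Ultrafilter c, ∀ a : c, {b : c | r a b} ∈ U := by
  have : Nonempty c := hne.to_subtype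
  have hdir : Directed (· ≥ ·) fun a : c => 𝓟 {b : c | r a b} := by
    intro a b
    rcases eq_or_ne a b with rfl | hab
    · exact ⟨a, le_rfl, le_rfl⟩
    rcases hc a.2 b.2 (Subtype.coe_ne_coe.2 hab) with h | h
    · exact ⟨b, principal_mono.2 fun x hx => htrans h hx, le_rfl⟩
    · exact ⟨a, le_rfl, principal_mono.2 fun x hx => htrans h hx⟩
  have := iInf_neBot_of_directed hdir fun a => principal_neBot_iff.2 ⟨a, hrefl _⟩
  exact ⟨.of _, fun a => Ultrafilter.of_le _ (mem_iInf_of_mem a (mem_principal_self _))⟩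

lemma exists_isAbsorbingSMap_le_of_isChain {c : Set ((E →L[ℂ] E) →ₗ[ℂ] (E →L[ℂ] E))}
    (hc : IsChain (fun ψ ψ' => ∀ T, ‖ψ' T‖ ≤ ‖ψ T‖) c) (hne : c.Nonempty)
    (hcS : ∀ ψ ∈ c, IsAbsorbingSMap S φ₀ ψ) :
    ∃ Ψ, IsAbsorbingSMap S φ₀ Ψ ∧ ∀ ψ ∈ c, ∀ T, ‖Ψ T‖ ≤ ‖ψ T‖ := by
  obtain ⟨U, hU⟩ := hc.exists_ultrafilter_forall_mem (fun _ _ => le_rfl)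
    (fun h h' T => (h' T).trans (h T)) hne
  obtain ⟨Ψ, hΨ⟩ := exists_tendstoPointwiseWOT U (fun ψ : c => ψ.1) fun T =>
    ⟨‖T‖, fun ψ => (hcS ψ ψ.2).1.1.norm_apply_le T⟩
  have hfix : ∀ s ∈ S, Ψ s = s := fun s hs =>
    hΨ.apply_eq (tendsto_const_nhds.congr fun ψ => ((hcS ψ ψ.2).1.2 s hs).symm)
  refine ⟨Ψ, ⟨⟨hΨ.fullCC (.of_forall fun ψ => (hcS ψ ψ.2).1.1), hfix⟩, LinearMap.ext fun T => ?_⟩,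
    fun ψ hψ T => hΨ.norm_apply_le (mem_of_superset (hU ⟨ψ, hψ⟩) fun _ hb => hb T)⟩
  have hzero : Ψ (φ₀ T - T) = 0 := hΨ.apply_eq <| tendsto_const_nhds.congr fun ψ => by
    rw [map_sub, eq_comm, sub_eq_zero, ← LinearMap.comp_apply, (hcS ψ ψ.2).2]
  rwa [map_sub, sub_eq_zero] at hzero

lemma IsSMap.exists_minimal_isAbsorbingSMap (hφ₀ : IsSMap S φ₀) :
    ∃ G, IsAbsorbingSMap S φ₀ G ∧ ∀ ψ, IsAbsorbingSMap S φ₀ ψ →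
      (∀ T, ‖ψ T‖ ≤ ‖G T‖) → ∀ T, ‖G T‖ ≤ ‖ψ T‖ := by
  obtain ⟨C, hC⟩ := hφ₀.exists_isSMap_comp_eq
  have hbdd (c : Set {ψ // IsAbsorbingSMap S φ₀ ψ})
      (hc : IsChain (fun a b => ∀ T, ‖b.1 T‖ ≤ ‖a.1 T‖) c) :
      ∃ ub : {ψ // IsAbsorbingSMap S φ₀ ψ}, ∀ a ∈ c, ∀ T, ‖ub.1 T‖ ≤ ‖a.1 T‖ := by
    rcases c.eq_empty_or_nonempty with rfl | hne
    · exact ⟨⟨C, hC⟩, by simp⟩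
    obtain ⟨Ψ, hΨ, hle⟩ := exists_isAbsorbingSMap_le_of_isChain
      (hc.image_of_map_rel _ _ Subtype.val fun _ _ => id) (hne.image _)
      (by rintro _ ⟨a, -, rfl⟩; exact a.2)
    exact ⟨⟨Ψ, hΨ⟩, fun a ha => hle a ⟨a, ha, rfl⟩⟩
  obtain ⟨G, hG⟩ := exists_maximal_of_chains_bounded hbdd fun hab hbc T => (hbc T).trans (hab T)
  exact ⟨G.1, G.2, fun ψ hψ hle => hG ⟨ψ, hψ⟩ hle⟩

lemma IsSMap.exists_isMinimalSProj_comp_eq (hφ₀ : IsSMap S φ₀) :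
    ∃ P, IsMinimalSProj S P ∧ P ∘ₗ φ₀ = P := by
  obtain ⟨G, hG, hmin⟩ := hφ₀.exists_minimal_isAbsorbingSMap
  have hidem : G ∘ₗ G = G := by
    obtain ⟨Θ, hΘ, hΘG⟩ := hG.1.exists_isSMap_comp_eq
    have hΘle (T : E →L[ℂ] E) : ‖Θ T‖ ≤ ‖G T‖ := by
      rw [← hΘG, LinearMap.comp_apply]; exact hΘ.1.norm_apply_le _
    have hΘφ₀ : Θ ∘ₗ φ₀ = Θ := by rw [← hΘG, LinearMap.comp_assoc, hG.2]
    refine LinearMap.ext fun T => ?_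
    have h := hmin Θ ⟨hΘ, hΘφ₀⟩ hΘle (T - G T)
    rwa [map_sub, map_sub, ← LinearMap.comp_apply Θ G, hΘG, sub_self, norm_zero,
      norm_le_zero_iff, sub_eq_zero, eq_comm] at h
  refine ⟨G, ⟨hG.1, hidem, fun ψ hψ hle T => le_antisymm (hle T) ?_⟩, hG.2⟩
  have hψG : ψ (G T) = ψ T := by
    have h := hle (T - G T)
    rwa [map_sub, map_sub, ← LinearMap.comp_apply G G, hidem, sub_self, norm_zero,
      norm_le_zero_iff, sub_eq_zero, eq_comm] at h
  rw [← hψG]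
  exact hmin (ψ ∘ₗ G) ⟨hψ.comp hG.1, by rw [LinearMap.comp_assoc, hG.2]⟩
    (fun T => hψ.1.norm_apply_le (G T)) T

end Absorbing

section MinimalProjection

variable {E : Type*} [NormedAddCommGroup E] [InnerProductSpace ℂ E] {S : Set (E →L[ℂ] E)}
  {P φ : (E →L[ℂ] E) →ₗ[ℂ] (E →L[ℂ] E)}

lemma IsMinimalSProj.comp_of_comp_eq (hP : IsMinimalSProj S P) (hφ : IsSMap S φ)
    (hPφ : P ∘ₗ φ = P) : IsMinimalSProj S (φ ∘ₗ P) := by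
  have hle (T : E →L[ℂ] E) : ‖(φ ∘ₗ P) T‖ ≤ ‖P T‖ := hφ.1.norm_apply_le _
  refine ⟨hφ.comp hP.1, ?_, fun ψ hψ hψle T => ?_⟩
  · rw [LinearMap.comp_assoc, ← LinearMap.comp_assoc P φ P, hPφ, hP.2.1]
  · rw [hP.2.2 _ (hφ.comp hP.1) hle, hP.2.2 ψ hψ fun T => (hψle T).trans (hle T)]

lemma IsMinimalSProj.mem_range_iff (hP : IsMinimalSProj S P) {T : E →L[ℂ] E} :
    T ∈ Set.range P ↔ P T = T :=
  (LinearMap.mem_range (f := P)).symm.trans (LinearMap.IsIdempotentElem.mem_range_iff hP.2.1)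

lemma IsSMap.apply_eq_of_forall_isMinimalSProj [CompleteSpace E] (hφ : IsSMap S φ)
    {T : E →L[ℂ] E} (hT : ∀ P, IsMinimalSProj S P → P T = T) : φ T = T := by
  obtain ⟨P, hP, hPφ⟩ := hφ.exists_isMinimalSProj_comp_eq
  simpa only [LinearMap.comp_apply, hT P hP] using hT _ (hP.comp_of_comp_eq hφ hPφ)

end MinimalProjection

/-- For a linear subspace `V ⊆ B(H)`, the set of minimal
`V`-projections on `B(H)` is nonempty, and the fixed space
`F(V) = {T : φ T = T for every V-map φ}` equals both the set of operators fixed by all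
minimal `V`-projections and the intersection of the ranges of all minimal
`V`-projections. -/
theorem stmt_14 (V : Submodule ℂ (H →L[ℂ] H)) :
    {E : (H →L[ℂ] H) →ₗ[ℂ] (H →L[ℂ] H) | IsMinimalSProj (V : Set (H →L[ℂ] H)) E}.Nonempty ∧
    {T : H →L[ℂ] H | ∀ φ : (H →L[ℂ] H) →ₗ[ℂ] (H →L[ℂ] H),
        IsSMap (V : Set (H →L[ℂ] H)) φ → φ T = T} =
      {T : H →L[ℂ] H | ∀ E : (H →L[ℂ] H) →ₗ[ℂ] (H →L[ℂ] H),
        IsMinimalSProj (V : Set (H →L[ℂ] H)) E → E T = T} ∧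
    {T : H →L[ℂ] H | ∀ φ : (H →L[ℂ] H) →ₗ[ℂ] (H →L[ℂ] H),
        IsSMap (V : Set (H →L[ℂ] H)) φ → φ T = T} =
      ⋂ E ∈ {E : (H →L[ℂ] H) →ₗ[ℂ] (H →L[ℂ] H) |
        IsMinimalSProj (V : Set (H →L[ℂ] H)) E}, Set.range ⇑E := by
  have hfixed : {T : H →L[ℂ] H | ∀ φ, IsSMap (V : Set (H →L[ℂ] H)) φ → φ T = T} =
      {T | ∀ P, IsMinimalSProj (V : Set (H →L[ℂ] H)) P → P T = T} :=
    Set.ext fun T => ⟨fun hT P hP => hT P hP.1,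
      fun hT _ hφ => hφ.apply_eq_of_forall_isMinimalSProj hT⟩
  obtain ⟨P, hP, -⟩ := (isSMap_id (S := (V : Set (H →L[ℂ] H)))).exists_isMinimalSProj_comp_eq
  refine ⟨⟨P, hP⟩, hfixed, hfixed.trans (Set.ext fun T => ?_)⟩
  simp only [Set.mem_ofPred_eq, Set.mem_iInter]
  exact forall₂_congr fun P hP => hP.mem_range_iff.symm
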